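/- Let H be a Hermitian matrix indexed by pairs (x,s), x ∈ {0,…,n−1} a site and s ∈ {A,B}, which is short range with parameters d > 0, K_d > 0. Then for every t ∈ ℝ and all sites x, y, the bound ‖(e^{itH})_{x,y}‖ ≤ e^{|t|·K_d − |x−y|/d} holds. -/

import Mathlib

/-! The weights `e^{|x-y|/d}` are submultiplicative, so the weighted row-sum norm defining
`FinShortRange` is submultiplicative and `H^k` is short range with constant `K^k`. Every block
of `H^k` is then bounded by `K^k e^{-|x-y|/d}`, and summing the exponential series of `e^{itH}`
blockwise gives `e^{|t|K} e^{-|x-y|/d}`. -/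

open MeasureTheory
open scoped ComplexOrder

noncomputable section

namespace Chiral

/-- The ℓ²-operator norm of a square complex matrix. -/
def opNorm {n : Type*} [Fintype n] [DecidableEq n] (T : Matrix n n ℂ) : ℝ :=
  ‖Matrix.toEuclideanCLM (𝕜 := ℂ) T‖

/-- The square root of a positive semidefinite matrix, as `Matrix.PosSemidef.sqrt`
was defined in Mathlib of December 2024 (since removed). -/
def posSemidefSqrt {n : Type*} [Fintype n] [DecidableEq n] {A : Matrix n n ℂ}
    (hA : A.PosSemidef) : Matrix n n ℂ :=
  (hA.1.eigenvectorUnitary : Matrix n n ℂ) *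
    Matrix.diagonal ((↑) ∘ Real.sqrt ∘ hA.1.eigenvalues) *
    (star hA.1.eigenvectorUnitary : Matrix n n ℂ)

/-- The trace norm `Tr √(T*T)` of a square complex matrix. -/
def traceNorm {n : Type*} [Fintype n] [DecidableEq n] (T : Matrix n n ℂ) : ℝ :=
  ((posSemidefSqrt (Matrix.posSemidef_conjTranspose_mul_self T)).trace).re

open Classical in
/-- Functional calculus of a Hermitian matrix: same eigenvectors, eigenvalue `E`
replaced by `f E`.  (Junk value `0` if the matrix is not Hermitian.) -/
def matFun {n : Type*} [Fintype n] [DecidableEq n] (f : ℝ → ℂ) (H : Matrix n n ℂ) :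
    Matrix n n ℂ :=
  if hH : H.IsHermitian then
    (hH.eigenvectorUnitary : Matrix n n ℂ) *
      Matrix.diagonal (fun i => f (hH.eigenvalues i)) *
      star (hH.eigenvectorUnitary : Matrix n n ℂ)
  else 0

/-- The matrix exponential. -/
def matExp {n : Type*} [Fintype n] [DecidableEq n] (M : Matrix n n ℂ) : Matrix n n ℂ :=
  NormedSpace.exp M

/-- `S = tanh (H/δ)` by functional calculus. -/
def tanhOf {n : Type*} [Fintype n] [DecidableEq n] (δ : ℝ) (H : Matrix n n ℂ) :
    Matrix n n ℂ :=
  matFun (fun E => (Real.tanh (E / δ) : ℂ)) H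

/-- Index set of the finite chain of length `L` with two internal degrees of freedom. -/
abbrev Site (L : ℕ) := Fin L × Fin 2

/-- The `2×2` block of a matrix on the chain corresponding to sites `x, y`. -/
def matBlock {L : ℕ} (T : Matrix (Site L) (Site L) ℂ) (x y : Fin L) :
    Matrix (Fin 2) (Fin 2) ℂ :=
  Matrix.of fun s s' => T (x, s) (y, s')

/-- A finite Hamiltonian is short range with parameters `d`, `K`. -/
def FinShortRange {L : ℕ} (H : Matrix (Site L) (Site L) ℂ) (d K : ℝ) : Prop :=
  ∀ x : Fin L, ∑ y : Fin L,
    opNorm (matBlock H x y) * Real.exp (|((x : ℕ) : ℝ) - ((y : ℕ) : ℝ)| / d) ≤ K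

/-- The chiral operator `C` on the finite chain: `+1` on the `A` component,
`-1` on the `B` component. -/
def chiralC (L : ℕ) : Matrix (Site L) (Site L) ℂ :=
  Matrix.diagonal fun p => if p.2 = 0 then 1 else -1

/-- The diagonal matrix `θ(X)` associated to a switch function `θ`. -/
def switchX {L : ℕ} (θ : Fin L → ℝ) : Matrix (Site L) (Site L) ℂ :=
  Matrix.diagonal fun p => (θ p.1 : ℂ)

/-- The standard switch function: `1` on the left half (`x < L/2`), `0` on the right half. -/
def midSwitch (L : ℕ) : Fin L → ℝ := fun x => if ((x : ℕ) : ℝ) < (L : ℝ) / 2 then 1 else 0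

/-- The edge index `Tr (C θ(X) (1 - S²))`. -/
def edgeIndex {L : ℕ} (θ : Fin L → ℝ) (S : Matrix (Site L) (Site L) ℂ) : ℂ :=
  Matrix.trace (chiralC L * switchX θ * (1 - S * S))

/-- The bulk index `½ Tr (C S [θ(X), S])`. -/
def bulkIndex {L : ℕ} (θ : Fin L → ℝ) (S : Matrix (Site L) (Site L) ℂ) : ℂ :=
  (1 / 2 : ℂ) * Matrix.trace (chiralC L * S * (switchX θ * S - S * switchX θ))

/-- The bulk Hilbert space `ℓ²(ℤ; ℂ²)`. -/
abbrev BulkSpace := lp (fun _ : ℤ => EuclideanSpace ℂ (Fin 2)) 2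

/-- Bounded operators on the bulk Hilbert space. -/
abbrev BulkOp := BulkSpace →L[ℂ] BulkSpace

/-- The canonical basis vector at site `x` with internal index `s`. -/
def bvec (x : ℤ) (s : Fin 2) : BulkSpace := lp.single 2 x (EuclideanSpace.single s 1)

/-- The `2×2` block `T_{x,y}` of a bulk operator. -/
def bulkBlock (T : BulkOp) (x y : ℤ) : Matrix (Fin 2) (Fin 2) ℂ :=
  Matrix.of fun s s' => (inner ℂ (bvec x s) (T (bvec y s')) : ℂ)

/-- A bulk Hamiltonian is short range with parameters `d`, `K`:
`sup_x ∑_y ‖T_{x,y}‖ e^{|x-y|/d} ≤ K`. -/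
def BulkShortRange (T : BulkOp) (d K : ℝ) : Prop :=
  ∀ x : ℤ,
    Summable (fun y : ℤ => opNorm (bulkBlock T x y) * Real.exp (|((x : ℝ)) - ((y : ℝ))| / d)) ∧
    ∑' y : ℤ, opNorm (bulkBlock T x y) * Real.exp (|((x : ℝ)) - ((y : ℝ))| / d) ≤ K

/-- The spectrum of `T` does not meet the open interval `(-Δ, Δ)`. -/
def HasGap (T : BulkOp) (Δ : ℝ) : Prop :=
  ∀ r : ℝ, |r| < Δ → (r : ℂ) ∉ spectrum ℂ T

/-- The on-site chiral matrix `diag(1, -1)`. -/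
def c2 : Matrix (Fin 2) (Fin 2) ℂ := Matrix.diagonal fun s => if s = 0 then 1 else -1

/-- A bulk operator is chiral: it anticommutes with the bulk chiral operator
(expressed blockwise, which is equivalent). -/
def ChiralBulk (T : BulkOp) : Prop :=
  ∀ x y : ℤ, c2 * bulkBlock T x y + bulkBlock T x y * c2 = 0

/-- The restriction `ι* T ι` of a bulk operator to the finite open chain of length `L`. -/
def restrict (L : ℕ) (T : BulkOp) : Matrix (Site L) (Site L) ℂ :=
  Matrix.of fun p q => bulkBlock T ((p.1 : ℕ) : ℤ) ((q.1 : ℕ) : ℤ) p.2 q.2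

-- With these instances `opNorm T` is `‖T‖` by definition (`Matrix.cstar_norm_def`).
open scoped Matrix.Norms.L2Operator

section ExpSeries

variable {𝕂 𝔸 E : Type*} [RCLike 𝕂] [NormedRing 𝔸] [NormedAlgebra 𝕂 𝔸]
  [CompleteSpace 𝔸] [NormedAddCommGroup E] [NormedSpace 𝕂 E]

theorem norm_map_exp_smul_le (L : 𝔸 →L[𝕂] E) (c : 𝕂) (a : 𝔸) {C R : ℝ}
    (h : ∀ k : ℕ, ‖L (a ^ k)‖ ≤ C * R ^ k) :
    ‖L (NormedSpace.exp (c • a))‖ ≤ C * Real.exp (‖c‖ * R) := by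
  have hL := (NormedSpace.exp_series_hasSum_exp' (𝕂 := 𝕂) (c • a)).mapL L
  have hR : HasSum (fun k : ℕ => C * ((‖c‖ * R) ^ k / k.factorial))
      (C * Real.exp (‖c‖ * R)) := by
    rw [Real.exp_eq_exp_ℝ]
    exact (NormedSpace.expSeries_div_hasSum_exp _).mul_left C
  refine hL.norm_le_of_bounded hR fun k => ?_
  rw [smul_pow, smul_smul, map_smul, norm_smul, norm_mul, norm_inv, norm_pow,
    RCLike.norm_natCast]
  calc (k.factorial : ℝ)⁻¹ * ‖c‖ ^ k * ‖L (a ^ k)‖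
      ≤ (k.factorial : ℝ)⁻¹ * ‖c‖ ^ k * (C * R ^ k) := by
        gcongr; exact h k
    _ = C * ((‖c‖ * R) ^ k / k.factorial) := by ring

end ExpSeries

section Blocks

variable {L : ℕ}

def matBlockCLM (x y : Fin L) : Matrix (Site L) (Site L) ℂ →L[ℂ] Matrix (Fin 2) (Fin 2) ℂ :=
  LinearMap.toContinuousLinearMap
    { toFun := (matBlock · x y)
      map_add' := fun _ _ => rfl
      map_smul' := fun _ _ => rfl }

theorem matBlock_one (x y : Fin L) :
    matBlock (1 : Matrix (Site L) (Site L) ℂ) x y = if x = y then 1 else 0 := by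
  ext s s'
  by_cases h : x = y <;> simp [matBlock, Matrix.one_apply, h]

theorem matBlock_mul (A B : Matrix (Site L) (Site L) ℂ) (x y : Fin L) :
    matBlock (A * B) x y = ∑ z : Fin L, matBlock A x z * matBlock B z y := by
  ext s s'
  simp [matBlock, Matrix.mul_apply, Matrix.sum_apply, Fintype.sum_prod_type]

theorem norm_matBlock_mul_le (A B : Matrix (Site L) (Site L) ℂ) (x y : Fin L) :
    ‖matBlock (A * B) x y‖ ≤ ∑ z : Fin L, ‖matBlock A x z‖ * ‖matBlock B z y‖ := by
  rw [matBlock_mul]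
  exact (norm_sum_le _ _).trans (Finset.sum_le_sum fun z _ => norm_mul_le _ _)

end Blocks

section ShortRange

variable {L : ℕ} {d K K' : ℝ}

def siteWeight (d : ℝ) (x y : Fin L) : ℝ :=
  Real.exp (|((x : ℕ) : ℝ) - ((y : ℕ) : ℝ)| / d)

theorem finShortRange_iff (H : Matrix (Site L) (Site L) ℂ) :
    FinShortRange H d K ↔ ∀ x, ∑ y, ‖matBlock H x y‖ * siteWeight d x y ≤ K := Iff.rfl

theorem siteWeight_self (d : ℝ) (x : Fin L) : siteWeight d x x = 1 := by
  simp [siteWeight]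

theorem siteWeight_pos (d : ℝ) (x y : Fin L) : 0 < siteWeight d x y := Real.exp_pos _

theorem siteWeight_le_mul (hd : 0 ≤ d) (x y z : Fin L) :
    siteWeight d x y ≤ siteWeight d x z * siteWeight d z y := by
  rw [siteWeight, siteWeight, siteWeight, ← Real.exp_add, ← add_div]
  gcongr
  exact abs_sub_le _ _ _

theorem FinShortRange.nonneg {H : Matrix (Site L) (Site L) ℂ} (h : FinShortRange H d K)
    (x : Fin L) : 0 ≤ K :=
  (Finset.sum_nonneg fun _ _ => mul_nonneg (norm_nonneg _) (Real.exp_nonneg _)).trans (h x)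

theorem FinShortRange.opNorm_matBlock_le {H : Matrix (Site L) (Site L) ℂ}
    (h : FinShortRange H d K) (x y : Fin L) :
    opNorm (matBlock H x y) ≤ Real.exp (-(|((x : ℕ) : ℝ) - ((y : ℕ) : ℝ)| / d)) * K := by
  rw [Real.exp_neg, inv_mul_eq_div, le_div_iff₀ (Real.exp_pos _)]
  exact Finset.single_le_sum (f := fun z => opNorm (matBlock H x z) * siteWeight d x z)
    (fun _ _ => mul_nonneg (norm_nonneg _) (Real.exp_nonneg _)) (Finset.mem_univ y) |>.trans (h x)

theorem finShortRange_one (d : ℝ) : FinShortRange (1 : Matrix (Site L) (Site L) ℂ) d 1 := by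
  rw [finShortRange_iff]
  intro x
  rw [Finset.sum_eq_single x (fun y _ hy => by rw [matBlock_one, if_neg (Ne.symm hy)]; simp)
    (by simp)]
  simp [matBlock_one, siteWeight_self]

theorem FinShortRange.mul {A B : Matrix (Site L) (Site L) ℂ} (hd : 0 ≤ d)
    (hA : FinShortRange A d K) (hB : FinShortRange B d K') :
    FinShortRange (A * B) d (K * K') := by
  intro x
  have hK' := hB.nonneg x
  rw [finShortRange_iff] at hA hB
  calc ∑ y, ‖matBlock (A * B) x y‖ * siteWeight d x y
      ≤ ∑ y, ∑ z,
          ‖matBlock A x z‖ * ‖matBlock B z y‖ * (siteWeight d x z * siteWeight d z y) := by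
        refine Finset.sum_le_sum fun y _ => ?_
        calc ‖matBlock (A * B) x y‖ * siteWeight d x y
            ≤ (∑ z, ‖matBlock A x z‖ * ‖matBlock B z y‖) * siteWeight d x y :=
              mul_le_mul_of_nonneg_right (norm_matBlock_mul_le A B x y) (siteWeight_pos d x y).le
          _ ≤ _ := by
              rw [Finset.sum_mul]
              exact Finset.sum_le_sum fun z _ => mul_le_mul_of_nonneg_left
                (siteWeight_le_mul hd x y z) (by positivity)
    _ = ∑ z, ‖matBlock A x z‖ * siteWeight d x z *
          ∑ y, ‖matBlock B z y‖ * siteWeight d z y := by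
        rw [Finset.sum_comm]
        simp only [Finset.mul_sum]
        exact Finset.sum_congr rfl fun z _ => Finset.sum_congr rfl fun y _ => by ring
    _ ≤ ∑ z, ‖matBlock A x z‖ * siteWeight d x z * K' :=
        Finset.sum_le_sum fun z _ => mul_le_mul_of_nonneg_left (hB z)
          (mul_nonneg (norm_nonneg _) (siteWeight_pos d x z).le)
    _ ≤ K * K' := by
        rw [← Finset.sum_mul]
        exact mul_le_mul_of_nonneg_right (hA x) hK'

theorem FinShortRange.pow {H : Matrix (Site L) (Site L) ℂ} (hd : 0 ≤ d)
    (h : FinShortRange H d K) (k : ℕ) : FinShortRange (H ^ k) d (K ^ k) := by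
  induction k with
  | zero => simpa using finShortRange_one d
  | succ k ih => simpa [pow_succ] using ih.mul hd h

end ShortRange

theorem stmt17_general {n : ℕ} (H : Matrix (Site n) (Site n) ℂ)
    (d Kd : ℝ) (hd : 0 < d) (hsr : FinShortRange H d Kd)
    (t : ℝ) (x y : Fin n) :
    opNorm (matBlock (matExp ((Complex.I * (t : ℂ)) • H)) x y) ≤
      Real.exp (|t| * Kd - |((x : ℕ) : ℝ) - ((y : ℕ) : ℝ)| / d) := by
  have hpow (k : ℕ) : ‖matBlockCLM x y (H ^ k)‖ ≤
      Real.exp (-(|((x : ℕ) : ℝ) - ((y : ℕ) : ℝ)| / d)) * Kd ^ k :=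
    (hsr.pow hd.le k).opNorm_matBlock_le x y
  calc opNorm (matBlock (matExp ((Complex.I * (t : ℂ)) • H)) x y)
      = ‖matBlockCLM x y (NormedSpace.exp ((Complex.I * (t : ℂ)) • H))‖ := rfl
    _ ≤ Real.exp (-(|((x : ℕ) : ℝ) - ((y : ℕ) : ℝ)| / d)) *
          Real.exp (‖Complex.I * (t : ℂ)‖ * Kd) := norm_map_exp_smul_le _ _ _ hpow
    _ = Real.exp (|t| * Kd - |((x : ℕ) : ℝ) - ((y : ℕ) : ℝ)| / d) := by
        rw [← Real.exp_add]
        simp [sub_eq_neg_add]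

theorem stmt17 {n : ℕ} (H : Matrix (Site n) (Site n) ℂ) (hH : H.IsHermitian)
    (d Kd : ℝ) (hd : 0 < d) (hKd : 0 < Kd) (hsr : FinShortRange H d Kd)
    (t : ℝ) (x y : Fin n) :
    opNorm (matBlock (matExp ((Complex.I * (t : ℂ)) • H)) x y) ≤
      Real.exp (|t| * Kd - |((x : ℕ) : ℝ) - ((y : ℕ) : ℝ)| / d) :=
  stmt17_general H d Kd hd hsr t x y

end Chiral

end
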